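/- Let G be a finite simple graph such that G − v is acyclic for some vertex v. Then there exists a set X ⊆ V(G) \ {v} such that G − X is acyclic and G contains a v-flower of order |X|. -/

import Mathlib

variable {V : Type*}

/-- The subgraph of `G` with edges restricted to the vertex set `S`
(kept on the same vertex type; vertices outside `S` become isolated).
Used to model the induced subgraph `G[S]` and vertex deletion `G - X = G[Xᶜ]`. -/
def graphRestrict (G : SimpleGraph V) (S : Set V) : SimpleGraph V where
  Adj u v := G.Adj u v ∧ u ∈ S ∧ v ∈ S
  symm := ⟨fun _ _ h => ⟨h.1.symm, h.2.2, h.2.1⟩⟩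
  loopless := ⟨fun v h => G.loopless.irrefl v h.1⟩

/-- `X` is a feedback vertex set of `G`: deleting `X` leaves an acyclic graph. -/
def IsFVS (G : SimpleGraph V) (X : Set V) : Prop :=
  (graphRestrict G Xᶜ).IsAcyclic

/-- The feedback vertex number of `G`: the minimum size of a feedback vertex set. -/
noncomputable def fvs (G : SimpleGraph V) : ℕ :=
  sInf {n | ∃ X : Set V, IsFVS G X ∧ X.ncard = n}

/-- `X` is a minimum feedback vertex set of `G`. -/
def IsMinFVS (G : SimpleGraph V) (X : Set V) : Prop :=
  IsFVS G X ∧ ∀ Y : Set V, IsFVS G Y → X.ncard ≤ Y.ncard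

/-- `(C, F)` is a feedback vertex cut in `G`: `C` and `F` are disjoint, `G[F]` is a
forest, and every tree of `G[F]` has at most one edge to `V(G) \ (C ∪ F)` (i.e. any two
edges from the same component of `G[F]` to the outside coincide). -/
def IsFVC (G : SimpleGraph V) (C F : Set V) : Prop :=
  Disjoint C F ∧ (graphRestrict G F).IsAcyclic ∧
    ∀ u₁ u₂ w₁ w₂ : V, u₁ ∈ F → u₂ ∈ F →
      (graphRestrict G F).Reachable u₁ u₂ →
      w₁ ∉ C ∪ F → w₂ ∉ C ∪ F → G.Adj u₁ w₁ → G.Adj u₂ w₂ →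
      u₁ = u₂ ∧ w₁ = w₂

/-- `(C, F)` is an antler in `G`: a feedback vertex cut with `|C| ≤ fvs(G[C ∪ F])`. -/
def IsAntler (G : SimpleGraph V) (C F : Set V) : Prop :=
  IsFVC G C F ∧ C.ncard ≤ fvs (graphRestrict G (C ∪ F))

/-- A graph `H` together with a vertex set `C` "has order `z`" if every connected
component `H'` of `H` satisfies `fvs(H') = |C ∩ V(H')| ≤ z`. -/
def HasCertOrder {W : Type*} (H : SimpleGraph W) (C : Set W) (z : ℕ) : Prop :=
  ∀ v : W,
    fvs (graphRestrict H {u | H.Reachable u v}) = (C ∩ {u | H.Reachable u v}).ncard ∧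
    (C ∩ {u | H.Reachable u v}).ncard ≤ z

/-- `H` is a `C`-certificate in `G`: a subgraph of `G` for which `C` is a minimum
feedback vertex set. -/
def IsCCertificate (G : SimpleGraph V) (C : Set V) (H : G.Subgraph) : Prop :=
  C ⊆ H.verts ∧ IsMinFVS H.coe {u : H.verts | (u : V) ∈ C}

/-- `H` is a `C`-certificate of order `z` in `G`. -/
def IsCCertificateOfOrder (G : SimpleGraph V) (C : Set V) (H : G.Subgraph) (z : ℕ) : Prop :=
  IsCCertificate G C H ∧ HasCertOrder H.coe {u : H.verts | (u : V) ∈ C} z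

/-- `(C, F)` is a `z`-antler in `G`: an antler such that `G[C ∪ F]` contains a
`C`-certificate of order `z`. -/
def IsZAntler (G : SimpleGraph V) (z : ℕ) (C F : Set V) : Prop :=
  IsAntler G C F ∧ ∃ H : G.Subgraph, H.verts ⊆ C ∪ F ∧ IsCCertificateOfOrder G C H z

/-- The function `f_r(x) = 2x³ + 3x² - x`. -/
def fr (x : ℕ) : ℕ := 2 * x ^ 3 + 3 * x ^ 2 - x

/-- A feedback vertex cut `(C, F)` is reducible if `|F| > f_r(|C|)`. -/
def IsReducibleFVC (G : SimpleGraph V) (C F : Set V) : Prop :=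
  IsFVC G C F ∧ fr C.ncard < F.ncard

/-- A feedback vertex cut `(C, F)` is simple if `|F| ≤ 2 f_r(|C|)` and either
`G[F]` is connected, or all trees of `G[F]` have a common neighbor `v` and there is a
single-tree feedback vertex cut `(C, F₂)` with `v ∈ F₂ \ F` and `F ⊆ F₂`. -/
def IsSimpleFVC (G : SimpleGraph V) (C F : Set V) : Prop :=
  IsFVC G C F ∧ F.ncard ≤ 2 * fr C.ncard ∧
    ((G.induce F).Connected ∨
      ∃ v : V,
        (∀ u ∈ F, ∃ u' ∈ F, (graphRestrict G F).Reachable u u' ∧ G.Adj u' v) ∧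
        ∃ F₂ : Set V, IsFVC G C F₂ ∧ (G.induce F₂).Connected ∧ v ∈ F₂ \ F ∧ F ⊆ F₂)

/-- `G` contains a `v`-flower of order `k`: `k` cycles whose vertex sets pairwise
intersect exactly in `{v}`. -/
def HasFlower (G : SimpleGraph V) (v : V) (k : ℕ) : Prop :=
  ∃ c : Fin k → G.Walk v v,
    (∀ i, (c i).IsCycle) ∧
    ∀ i j, i ≠ j → {x | x ∈ (c i).support} ∩ {x | x ∈ (c j).support} = {v}

/-- `G` contains `k` pairwise vertex-disjoint cycles. -/
def HasDisjointCycles (G : SimpleGraph V) (k : ℕ) : Prop :=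
  ∃ (b : Fin k → V) (c : ∀ i, G.Walk (b i) (b i)),
    (∀ i, (c i).IsCycle) ∧
    ∀ i j, i ≠ j → Disjoint {x | x ∈ (c i).support} {x | x ∈ (c j).support}

/-- `(C, F)` is a 1-antler in `G` (self-contained definition): `G[F]` is a forest,
every tree of `G[F]` has at most one edge to `V(G) \ (C ∪ F)`, and `G[C ∪ F]`
contains `|C|` pairwise vertex-disjoint cycles. -/
def IsOneAntler (G : SimpleGraph V) (C F : Set V) : Prop :=
  IsFVC G C F ∧ HasDisjointCycles (graphRestrict G (C ∪ F)) C.ncard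

/-- `C 1, F 1, …, C ℓ, F ℓ` is a `z`-antler-sequence for `G`: the sets are pairwise
disjoint and each `(C i, F i)` is a `z`-antler in `G` minus all earlier sets. -/
def IsAntlerSeq (G : SimpleGraph V) (z ℓ : ℕ) (C F : Fin ℓ → Set V) : Prop :=
  (∀ i j, i ≠ j → Disjoint (C i) (C j)) ∧
  (∀ i j, i ≠ j → Disjoint (F i) (F j)) ∧
  (∀ i j, Disjoint (C i) (F j)) ∧
  ∀ i, IsZAntler (graphRestrict G (⋃ j, ⋃ (_ : j < i), (C j ∪ F j))ᶜ) z (C i) (F i)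

/-! Every cycle of `G` passes through `v`, so the cycles of `G` correspond to the *petals*: paths
of the forest `G - v` joining two distinct neighbours of `v`. Root every tree of `G - v`. Among
vertex sets of subtrees of a rooted forest, one whose top vertex `x` is deepest is *anchored*:
every other member meeting it contains `x`. Greedily taking an anchored petal, recording its
anchor and discarding all petals meeting it therefore produces pairwise disjoint petals (closing
up to a `v`-flower) together with one anchor for each, and the anchors meet every petal, hence
every cycle of `G`. -/

namespace Set

variable {α : Type*}

def IsAnchor (𝒜 : Set (Set α)) (S : Set α) (x : α) : Prop :=
  x ∈ S ∧ ∀ T ∈ 𝒜, (S ∩ T).Nonempty → x ∈ T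

theorem exists_pairwiseDisjoint_hitting_of_isAnchor [Finite α] (𝒜 : Set (Set α))
    (h : ∀ ℬ ⊆ 𝒜, ℬ.Nonempty → ∃ S ∈ ℬ, ∃ x, IsAnchor ℬ S x) :
    ∃ (X : Finset α) (S : α → Set α), (∀ x ∈ X, S x ∈ 𝒜 ∧ x ∈ S x) ∧
      (X : Set α).PairwiseDisjoint S ∧ ∀ T ∈ 𝒜, ∃ x ∈ X, x ∈ T := by
  classical
  induction hn : (⋃₀ 𝒜).ncard using Nat.strong_induction_on generalizing 𝒜 with
  | _ n ih =>
  rcases 𝒜.eq_empty_or_nonempty with rfl | hne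
  · exact ⟨∅, fun _ => ∅, by simp, by simp, by simp⟩
  obtain ⟨S₀, hS₀, x₀, hx₀, hanchor⟩ := h 𝒜 subset_rfl hne
  set 𝒜' := {T ∈ 𝒜 | Disjoint S₀ T}
  have hx₀' : ∀ T ∈ 𝒜', x₀ ∉ T := fun T hT => disjoint_left.1 hT.2 hx₀
  have hssub : ⋃₀ 𝒜' ⊂ ⋃₀ 𝒜 := by
    refine ssubset_of_subset_of_ne (sUnion_mono (sep_subset _ _)) fun heq => ?_
    obtain ⟨T, hT, hxT⟩ := mem_sUnion.1 (heq ▸ mem_sUnion_of_mem hx₀ hS₀)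
    exact hx₀' T hT hxT
  obtain ⟨X, S, hS, hdisj, hhit⟩ := ih _ (hn ▸ ncard_lt_ncard hssub (toFinite _)) 𝒜'
    (fun ℬ hℬ => h ℬ (hℬ.trans (sep_subset _ _))) rfl
  have hx₀X : x₀ ∉ X := fun hx => hx₀' _ (hS x₀ hx).1 (hS x₀ hx).2
  have hSeq : ∀ x ∈ X, Function.update S x₀ S₀ x = S x := fun x hx =>
    Function.update_of_ne (ne_of_mem_of_not_mem hx hx₀X) _ _
  refine ⟨insert x₀ X, Function.update S x₀ S₀, ?_, ?_, fun T hT => ?_⟩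
  · simp only [Finset.forall_mem_insert, Function.update_self]
    exact ⟨⟨hS₀, hx₀⟩, fun x hx => hSeq x hx ▸ ⟨(hS x hx).1.1, (hS x hx).2⟩⟩
  · rw [Finset.coe_insert, pairwiseDisjoint_insert_of_notMem hx₀X]
    refine ⟨fun x hx y hy hxy => ?_, fun x hx => ?_⟩
    · simpa only [Function.onFun, hSeq x hx, hSeq y hy] using hdisj hx hy hxy
    · simpa only [Function.update_self, hSeq x hx] using (hS x hx).1.2
  · by_cases hmeet : (S₀ ∩ T).Nonempty
    · exact ⟨x₀, Finset.mem_insert_self _ _, hanchor T hT hmeet⟩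
    · obtain ⟨x, hx, hxT⟩ :=
        hhit T ⟨hT, disjoint_iff_inter_eq_empty.2 (not_nonempty_iff_eq_empty.1 hmeet)⟩
      exact ⟨x, Finset.mem_insert_of_mem hx, hxT⟩

end Set

namespace SimpleGraph

open Walk

variable {G F : SimpleGraph V} {v : V}

namespace Walk

lemma IsPath.append_of_forall_mem_support {a m b : V} {p : G.Walk a m} {q : G.Walk m b}
    (hp : p.IsPath) (hq : q.IsPath) (h : ∀ x ∈ p.support, x ∈ q.support → x = m) :
    (p.append q).IsPath := by
  have hq' := hq.support_nodup
  rw [← cons_tail_support, List.nodup_cons] at hq'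
  rw [isPath_def, support_append, List.nodup_append']
  refine ⟨hp.support_nodup, hq'.2, fun x hx hxq => hq'.1 ?_⟩
  exact h x hx (List.mem_of_mem_tail hxq) ▸ hxq

lemma exists_isPath_support_subset {a b u w : V} {p : G.Walk a b} (hu : u ∈ p.support)
    (hw : w ∈ p.support) : ∃ q : G.Walk u w, q.IsPath ∧ q.support ⊆ p.support := by
  classical
  obtain ⟨pu, qu, hpu⟩ := p.mem_support_iff_exists_append.1 hu
  obtain ⟨pw, qw, hpw⟩ := p.mem_support_iff_exists_append.1 hw
  refine ⟨(pu.reverse.append pw).bypass, bypass_isPath _, fun x hx => ?_⟩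
  replace hx := support_bypass_subset_support _ hx
  rw [mem_support_append_iff, support_reverse, List.mem_reverse] at hx
  rcases hx with hx | hx
  · exact hpu ▸ support_subset_support_append_left _ _ hx
  · exact hpw ▸ support_subset_support_append_left _ _ hx

end Walk

-- `w ∈ (F.rootPath y).support` says that `w` is an ancestor of `y` in the rooted forest.
noncomputable def root (F : SimpleGraph V) (u : V) : V := (F.connectedComponentMk u).out

lemma reachable_root (F : SimpleGraph V) (u : V) : F.Reachable (F.root u) u :=
  ConnectedComponent.exact (F.connectedComponentMk u).out_eq

lemma Reachable.root_eq {u w : V} (h : F.Reachable u w) : F.root u = F.root w := by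
  rw [root, root, ConnectedComponent.sound h]

noncomputable def rootPath (F : SimpleGraph V) (u : V) : F.Walk (F.root u) u :=
  (F.reachable_root u).exists_isPath.choose

lemma isPath_rootPath (F : SimpleGraph V) (u : V) : (F.rootPath u).IsPath :=
  (F.reachable_root u).exists_isPath.choose_spec

noncomputable def depth (F : SimpleGraph V) (u : V) : ℕ := (F.rootPath u).length

namespace IsAcyclic

lemma eq_rootPath (hF : F.IsAcyclic) {a u : V} {p : F.Walk a u} (hp : p.IsPath)
    (ha : F.root u = a) : p = (F.rootPath u).copy ha rfl := by
  subst ha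
  exact congrArg Subtype.val ((hF.subsingleton_path _ _).elim ⟨p, hp⟩ ⟨_, F.isPath_rootPath u⟩)

lemma depth_lt_of_mem_rootPath (hF : F.IsAcyclic) {u w : V} (hw : w ∈ (F.rootPath u).support)
    (hwu : w ≠ u) : F.depth w < F.depth u := by
  obtain ⟨p, q, hp, -, hpq⟩ := (F.isPath_rootPath u).mem_support_iff_exists_append.1 hw
  have hlen : p.length = F.depth w := by
    rw [hF.eq_rootPath hp (Reachable.root_eq ⟨q⟩), length_copy, depth]
  have hq : q.length ≠ 0 := fun h => hwu (eq_of_length_eq_zero h)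
  rw [depth.eq_def F u, hpq, length_append, hlen]
  omega

lemma mem_rootPath_of_min_depth (hF : F.IsAcyclic) {a b m y : V} {p : F.Walk a b}
    (hm : m ∈ p.support) (hmin : ∀ w ∈ p.support, F.depth m ≤ F.depth w) (hy : y ∈ p.support) :
    m ∈ (F.rootPath y).support ∧
      ∀ w ∈ (F.rootPath y).support, F.depth m ≤ F.depth w → w ∈ p.support := by
  obtain ⟨q, hq, hqp⟩ := exists_isPath_support_subset hm hy
  have hpath : ((F.rootPath m).append q).IsPath := by
    refine (F.isPath_rootPath m).append_of_forall_mem_support hq fun x hx hxq => ?_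
    by_contra hxm
    exact (hF.depth_lt_of_mem_rootPath hx hxm).not_ge (hmin x (hqp hxq))
  have hsupp : (F.rootPath y).support = (F.rootPath m).support ++ q.support.tail := by
    rw [← support_append, hF.eq_rootPath hpath (Reachable.root_eq ⟨q.reverse⟩), support_copy]
  refine ⟨hsupp ▸ List.mem_append_left _ (end_mem_support _), fun w hw hmw => ?_⟩
  rw [hsupp, List.mem_append] at hw
  rcases hw with hw | hw
  · by_contra hwp
    have hwm : w ≠ m := fun h => hwp (h ▸ hm)
    exact (hF.depth_lt_of_mem_rootPath hw hwm).not_ge hmw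
  · exact hqp (List.mem_of_mem_tail hw)

theorem exists_isAnchor [Finite V] (hF : F.IsAcyclic) {𝒜 : Set (Set V)}
    (h𝒜 : ∀ S ∈ 𝒜, ∃ (a b : V) (p : F.Walk a b), {x | x ∈ p.support} = S) (hne : 𝒜.Nonempty) :
    ∃ S ∈ 𝒜, ∃ x, Set.IsAnchor 𝒜 S x := by
  have htop : ∀ S ∈ 𝒜, ∃ m ∈ S, ∀ w ∈ S, F.depth m ≤ F.depth w := fun S hS => by
    obtain ⟨a, b, p, rfl⟩ := h𝒜 S hS
    exact Set.exists_min_image _ _ (Set.toFinite _) ⟨a, p.start_mem_support⟩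
  obtain ⟨S₀, hS₀⟩ := hne
  obtain ⟨m₀, hm₀, hmin₀⟩ := htop S₀ hS₀
  obtain ⟨m, ⟨S, hS, hmS, hmin⟩, hmax⟩ :=
    Set.exists_max_image {m | ∃ S ∈ 𝒜, m ∈ S ∧ ∀ w ∈ S, F.depth m ≤ F.depth w} F.depth
      (Set.toFinite _) ⟨m₀, S₀, hS₀, hm₀, hmin₀⟩
  refine ⟨S, hS, m, hmS, fun T hT ⟨y, hyS, hyT⟩ => ?_⟩
  obtain ⟨m', hm'T, hmin'⟩ := htop T hT
  have hm'm := hmax m' ⟨T, hT, hm'T, hmin'⟩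
  obtain ⟨a, b, p, rfl⟩ := h𝒜 S hS
  obtain ⟨a', b', q, rfl⟩ := h𝒜 T hT
  exact (hF.mem_rootPath_of_min_depth hm'T hmin' hyT).2 m
    (hF.mem_rootPath_of_min_depth hmS hmin hyS).1 hm'm

end IsAcyclic

lemma graphRestrict_le (G : SimpleGraph V) (S : Set V) : graphRestrict G S ≤ G :=
  fun _ _ h => h.1

lemma mem_of_mem_support_graphRestrict {S : Set V} {a b : V} (p : (graphRestrict G S).Walk a b)
    (ha : a ∈ S) : ∀ x ∈ p.support, x ∈ S := by
  induction p with
  | nil => simpa using ha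
  | cons h _ ih => simpa [ha] using ih h.2.2

lemma edges_mem_graphRestrict {S : Set V} {a b : V} {p : G.Walk a b}
    (hp : ∀ x ∈ p.support, x ∈ S) : ∀ e ∈ p.edges, e ∈ (graphRestrict G S).edgeSet := by
  intro e he
  induction e with
  | h x y =>
    exact ⟨p.adj_of_mem_edges he, hp x (p.fst_mem_support_of_mem_edges he),
      hp y (p.snd_mem_support_of_mem_edges he)⟩

lemma mem_support_of_isCycle (h : (graphRestrict G {v}ᶜ).IsAcyclic) {u : V} {c : G.Walk u u}
    (hc : c.IsCycle) : v ∈ c.support := by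
  by_contra hv
  have hS : ∀ x ∈ c.support, x ∈ ({v}ᶜ : Set V) := fun x hx hxv => hv (hxv ▸ hx)
  exact h _ (hc.transfer (edges_mem_graphRestrict hS))

-- The petals are the vertex sets of the cycles through `v`, with `v` removed.
def IsPetal (G : SimpleGraph V) (v : V) (S : Set V) : Prop :=
  ∃ (a b : V) (p : (graphRestrict G {v}ᶜ).Walk a b), p.IsPath ∧ G.Adj v a ∧ G.Adj v b ∧ a ≠ b ∧
    {x | x ∈ p.support} = S

lemma IsPetal.notMem {S : Set V} (hS : IsPetal G v S) : v ∉ S := by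
  obtain ⟨a, b, p, -, ha, -, -, rfl⟩ := hS
  exact fun hv => mem_of_mem_support_graphRestrict p ha.ne' v hv rfl

lemma IsPetal.exists_isCycle {S : Set V} (hS : IsPetal G v S) :
    ∃ c : G.Walk v v, c.IsCycle ∧ ∀ x ∈ c.support, x = v ∨ x ∈ S := by
  obtain ⟨a, b, p, hp, ha, hb, hab, rfl⟩ := hS
  have hvp : v ∉ (p.mapLe (graphRestrict_le G _)).support := by
    rw [support_mapLe_eq_support]
    exact fun hv => mem_of_mem_support_graphRestrict p ha.ne' v hv rfl
  refine ⟨cons ha ((p.mapLe (graphRestrict_le G _)).concat hb.symm), ?_, fun x hx => ?_⟩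
  · refine (cons_isCycle_iff _ ha).2 ⟨(hp.mapLe _).concat hvp hb.symm, ?_⟩
    rw [edges_concat, List.concat_eq_append, List.mem_append, List.mem_singleton, Sym2.eq_iff]
    rintro (he | ⟨hvb, -⟩ | ⟨-, hab'⟩)
    · exact hvp (fst_mem_support_of_mem_edges _ he)
    · exact hb.ne hvb
    · exact hab hab'
  · rw [support_cons, support_concat, support_mapLe_eq_support, List.mem_cons, List.mem_append,
      List.mem_singleton] at hx
    tauto

lemma Walk.IsCycle.exists_isPetal {u : V} {c : G.Walk u u} (hc : c.IsCycle)
    (hv : v ∈ c.support) : ∃ S, IsPetal G v S ∧ S ⊆ {x | x ∈ c.support} := by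
  classical
  have hc' : (c.rotate v hv).IsCycle := hc.rotate hv
  have hsub : ∀ x ∈ (c.rotate v hv).support, x ∈ c.support := fun x =>
    (mem_support_rotate_iff c v hv).1
  generalize c.rotate v hv = c' at hc' hsub
  cases c' with
  | nil => exact absurd hc' not_isCycle_nil
  | @cons _ a _ hva p =>
    obtain ⟨hp, hvap⟩ := (cons_isCycle_iff p hva).1 hc'
    have hpn : ¬ p.Nil := not_nil_of_isCycle_cons hc'
    have hsupp := support_dropLast_concat hpn
    have hvq : v ∉ p.dropLast.support := by
      have hnd := hp.support_nodup
      rw [← hsupp, List.nodup_append'] at hnd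
      exact fun hv => hnd.2.2 hv (List.mem_singleton_self v)
    have hab : a ≠ p.penultimate := by
      intro h
      have he := mk_penultimate_end_mem_edges hpn
      rw [← h, Sym2.eq_swap] at he
      exact hvap he
    refine ⟨_, ⟨a, p.penultimate,
      p.dropLast.transfer _ (edges_mem_graphRestrict fun x hx hxv => hvq (hxv ▸ hx)),
      hp.dropLast.transfer _, hva, (adj_penultimate hpn).symm, hab, rfl⟩, fun x hx => hsub x ?_⟩
    rw [Set.mem_ofPred_eq, support_transfer] at hx
    exact List.mem_cons_of_mem _ (hsupp ▸ List.mem_append_left _ hx)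

end SimpleGraph

lemma hasFlower_of_finset {ι : Type*} {G : SimpleGraph V} {v : V} (X : Finset ι)
    (c : ι → G.Walk v v) (hc : ∀ i ∈ X, (c i).IsCycle)
    (hd : ∀ i ∈ X, ∀ j ∈ X, i ≠ j → ∀ x ∈ (c i).support, x ∈ (c j).support → x = v) :
    HasFlower G v X.card := by
  refine ⟨fun i => c (X.equivFin.symm i), fun i => hc _ (X.equivFin.symm i).2, fun i j hij => ?_⟩
  ext x
  simp only [Set.mem_inter_iff, Set.mem_ofPred_eq, Set.mem_singleton_iff]
  refine ⟨fun ⟨hi, hj⟩ => hd _ (X.equivFin.symm i).2 _ (X.equivFin.symm j).2 ?_ x hi hj, ?_⟩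
  · exact fun h => hij (X.equivFin.symm.injective (Subtype.ext h))
  · rintro rfl
    exact ⟨(c _).start_mem_support, (c _).start_mem_support⟩

open SimpleGraph Walk in
theorem stmt12 [Fintype V] (G : SimpleGraph V) (v : V)
    (h : (graphRestrict G {v}ᶜ).IsAcyclic) :
    ∃ X : Set V, X ⊆ {v}ᶜ ∧ (graphRestrict G Xᶜ).IsAcyclic ∧ HasFlower G v X.ncard := by
  obtain ⟨X, S, hS, hdisj, hhit⟩ :=
    Set.exists_pairwiseDisjoint_hitting_of_isAnchor {S | IsPetal G v S} fun ℬ hℬ hne =>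
      h.exists_isAnchor (fun S hS => have ⟨a, b, p, _, _, _, _, hp⟩ := hℬ hS; ⟨a, b, p, hp⟩) hne
  choose! c hc hcS using fun x (hx : x ∈ X) => (hS x hx).1.exists_isCycle
  refine ⟨X, fun x hx hxv => (hS x hx).1.notMem (hxv ▸ (hS x hx).2), fun u c' hc' => ?_, ?_⟩
  · have hcG := hc'.mapLe (graphRestrict_le G _)
    obtain ⟨T, hT, hTc⟩ := hcG.exists_isPetal (mem_support_of_isCycle h hcG)
    obtain ⟨x, hxX, hxT⟩ := hhit T hT
    have hu : u ∈ (X : Set V)ᶜ := (c'.adj_snd hc'.not_nil).2.1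
    refine mem_of_mem_support_graphRestrict c' hu x ?_ hxX
    simpa only [Set.mem_ofPred_eq, support_mapLe_eq_support] using hTc hxT
  · rw [Set.ncard_coe_finset]
    refine hasFlower_of_finset X c hc fun x hx y hy hxy z hzx hzy => by_contra fun hz => ?_
    exact Set.disjoint_left.1 (hdisj hx hy hxy) ((hcS x hx z hzx).resolve_left hz)
      ((hcS y hy z hzy).resolve_left hz)
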